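/- For each l ≥ -1, the span of set partitions of left-height at most l is closed under the partition category composition: if p and q each have left-height at most l and are composable, then every partition appearing in their composite has left-height at most l. In particular, the sets P_{≤l}(n,m) span a subcategory of the partition category. -/

import Mathlib

open Classical

/-!  A combinatorial axiomatisation of pictures and of the left-height of a
set partition, as sanctioned by the paper.  A picture is presented as a *plan*:
a vertical stack of elementary rows, each row consisting of identity strands
together with a single elementary generator of the partition category
(a crossing, cup, cap, merge, split, unit or counit) placed after `w` strands.
The only crossing points are those of `swap` rows, and a crossing placed after
`w` strands has left-height `w` (a path to the left edge at that level crosses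
exactly the `w` strands to its left).  The left-height of a partition is the
minimum height over all plans realising it. -/

/-- An elementary row with `w` strands to the left of the generator and `v`
strands to its right. -/
inductive Row : ℕ → ℕ → Type
  | swap  (w v : ℕ) : Row (w + 2 + v) (w + 2 + v)
  | cap   (w v : ℕ) : Row (w + 2 + v) (w + v)
  | cup   (w v : ℕ) : Row (w + v) (w + 2 + v)
  | mu    (w v : ℕ) : Row (w + 2 + v) (w + 1 + v)
  | delta (w v : ℕ) : Row (w + 1 + v) (w + 2 + v)
  | eta   (w v : ℕ) : Row (w + v) (w + 1 + v)
  | eps   (w v : ℕ) : Row (w + 1 + v) (w + v)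

/-- The connections realised by an elementary row, as a relation between its
top boundary (`inl`) and bottom boundary (`inr`) points. -/
def rowRel : {a b : ℕ} → Row a b → (Fin a ⊕ Fin b) → (Fin a ⊕ Fin b) → Prop
  | _, _, .swap w _ => fun x y =>
      match x, y with
      | .inl i, .inr j => (i.val = w ∧ j.val = w + 1) ∨ (i.val = w + 1 ∧ j.val = w) ∨
          (i.val ≠ w ∧ i.val ≠ w + 1 ∧ j.val = i.val)
      | _, _ => False
  | _, _, .cap w _ => fun x y =>
      match x, y with
      | .inl i, .inl j => i.val = w ∧ j.val = w + 1
      | .inl i, .inr j => (i.val < w ∧ j.val = i.val) ∨ (w + 2 ≤ i.val ∧ j.val + 2 = i.val)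
      | _, _ => False
  | _, _, .cup w _ => fun x y =>
      match x, y with
      | .inr i, .inr j => i.val = w ∧ j.val = w + 1
      | .inl i, .inr j => (i.val < w ∧ j.val = i.val) ∨ (w ≤ i.val ∧ j.val = i.val + 2)
      | _, _ => False
  | _, _, .mu w _ => fun x y =>
      match x, y with
      | .inl i, .inr j => (i.val < w ∧ j.val = i.val) ∨
          ((i.val = w ∨ i.val = w + 1) ∧ j.val = w) ∨
          (w + 2 ≤ i.val ∧ j.val + 1 = i.val)
      | _, _ => False
  | _, _, .delta w _ => fun x y =>
      match x, y with
      | .inl i, .inr j => (i.val < w ∧ j.val = i.val) ∨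
          (i.val = w ∧ (j.val = w ∨ j.val = w + 1)) ∨
          (w + 1 ≤ i.val ∧ j.val = i.val + 1)
      | _, _ => False
  | _, _, .eta w _ => fun x y =>
      match x, y with
      | .inl i, .inr j => (i.val < w ∧ j.val = i.val) ∨ (w ≤ i.val ∧ j.val = i.val + 1)
      | _, _ => False
  | _, _, .eps w _ => fun x y =>
      match x, y with
      | .inl i, .inr j => (i.val < w ∧ j.val = i.val) ∨ (w + 1 ≤ i.val ∧ j.val + 1 = i.val)
      | _, _ => False

/-- The left-height contributed by a row: a crossing placed after `w` strands
has left-height `w`; the other generators have no crossing points. -/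
def rowHt : {a b : ℕ} → Row a b → ℤ
  | _, _, .swap w _ => (w : ℤ)
  | _, _, _ => -1

/-- The identity connection relation (vertical strands). -/
def idConn (a : ℕ) : (Fin a ⊕ Fin a) → (Fin a ⊕ Fin a) → Prop := fun x y =>
  match x, y with
  | .inl i, .inr j => i.val = j.val
  | _, _ => False

section Stack

variable {a b c : ℕ}

/-- Inclusions into the three-layer set used for stacking. -/
def ιtop : Fin a ⊕ Fin b → Fin a ⊕ (Fin b ⊕ Fin c)
  | .inl i => .inl i
  | .inr j => .inr (.inl j)

def ιbot : Fin b ⊕ Fin c → Fin a ⊕ (Fin b ⊕ Fin c) := Sum.inr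

def ιout : Fin a ⊕ Fin c → Fin a ⊕ (Fin b ⊕ Fin c)
  | .inl i => .inl i
  | .inr j => .inr (.inr j)

/-- Composition (stacking) of two partitions, given as relations on their
boundaries: the transitive closure of the union, restricted to the outer
boundary. -/
def stackRel (P : (Fin a ⊕ Fin b) → (Fin a ⊕ Fin b) → Prop)
    (Q : (Fin b ⊕ Fin c) → (Fin b ⊕ Fin c) → Prop) :
    (Fin a ⊕ Fin c) → (Fin a ⊕ Fin c) → Prop := fun x y =>
  Relation.EqvGen
    (fun s t => (∃ u v, P u v ∧ s = ιtop u ∧ t = ιtop v) ∨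
      (∃ u v, Q u v ∧ s = ιbot (a := a) u ∧ t = ιbot (a := a) v))
    (ιout x) (ιout y)

end Stack

/-- A plan (combinatorial picture): a vertical stack of elementary rows. -/
inductive Plan : ℕ → ℕ → Type
  | nil (a : ℕ) : Plan a a
  | cons {a b c : ℕ} : Row a b → Plan b c → Plan a c

/-- The partition (boundary equivalence relation) realised by a plan. -/
def planRel : {a b : ℕ} → Plan a b → (Fin a ⊕ Fin b) → (Fin a ⊕ Fin b) → Prop
  | _, _, .nil a => Relation.EqvGen (idConn a)
  | _, _, .cons r rest => stackRel (Relation.EqvGen (rowRel r)) (planRel rest)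

/-- The left-height of a plan: the maximal left-height of its crossing points,
or `-1` if it has none. -/
def planHt : {a b : ℕ} → Plan a b → ℤ
  | _, _, .nil _ => -1
  | _, _, .cons r rest => max (rowHt r) (planHt rest)

/-- `Realizes pl P`: the plan `pl` is a picture of the partition given by the
boundary relation `P`. -/
def Realizes {a b : ℕ} (pl : Plan a b) (P : (Fin a ⊕ Fin b) → (Fin a ⊕ Fin b) → Prop) : Prop :=
  ∀ x y, planRel pl x y ↔ P x y

/-- The left-height of a partition: the minimum of the heights of the pictures
representing it. -/
noncomputable def ht {a b : ℕ} (P : (Fin a ⊕ Fin b) → (Fin a ⊕ Fin b) → Prop) : ℤ :=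
  sInf {h : ℤ | ∃ pl : Plan a b, Realizes pl P ∧ planHt pl = h}

/-! Stacking a picture of `p` on a picture of `q` is a picture of their composite, and its
crossing points are those of the two pictures, so its left-height is the larger of the two.
The only real content is that the partition of a stack of rows can be computed piece by piece:
composition of boundary relations is associative with identity strands as unit.  Associativity
holds because gluing two equivalence relations along a common interface only transmits, from
each side, the connections it induces on that interface. -/

open Function Relation

namespace Relation

variable {W X Y Z : Type*}

theorem eqvGen_le_of_equivalence {r T : X → X → Prop} (hT : Equivalence T) (h : r ≤ T) :
    EqvGen r ≤ T :=
  haveI := hT.isEquiv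
  EqvGen.eqvGen_le h

theorem eqvGen_eq_of_le_of_le {r s : X → X → Prop} (hrs : r ≤ EqvGen s) (hsr : s ≤ EqvGen r) :
    EqvGen r = EqvGen s :=
  le_antisymm (EqvGen.eqvGen_le hrs) (EqvGen.eqvGen_le hsr)

theorem map_sup (r s : Y → Y → Prop) (f : Y → X) :
    Relation.Map (r ⊔ s) f f = Relation.Map r f f ⊔ Relation.Map s f f := by
  ext x x'
  simp only [Relation.Map, Pi.sup_apply, sup_Prop_eq, or_and_right, exists_or]

theorem eqvGen_map_sup_iff (f : Y → X) (r : Y → Y → Prop) (s : X → X → Prop) (y y' : Y) :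
    EqvGen (Relation.Map r f f ⊔ s) (f y) (f y') ↔ EqvGen (r ⊔ (EqvGen s on f)) y y' := by
  set R := r ⊔ (EqvGen s on f)
  constructor
  · -- each point is tracked by the `s`-classes it shares with the image of `f`
    let E : X → X → Prop := fun a b => EqvGen s a b ∨
      ∃ u v, EqvGen s a (f u) ∧ EqvGen s b (f v) ∧ EqvGen R u v
    have hE : Equivalence E := by
      refine ⟨fun a => Or.inl (EqvGen.refl a), ?_, ?_⟩
      · rintro a b (h | ⟨u, v, hu, hv, huv⟩)
        · exact Or.inl (EqvGen.symm _ _ h)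
        · exact Or.inr ⟨v, u, hv, hu, EqvGen.symm _ _ huv⟩
      · rintro a b c (hab | ⟨u, v, hu, hv, huv⟩) (hbc | ⟨u', v', hu', hv', huv'⟩)
        · exact Or.inl (EqvGen.trans _ _ _ hab hbc)
        · exact Or.inr ⟨u', v', EqvGen.trans _ _ _ hab hu', hv', huv'⟩
        · exact Or.inr ⟨u, v, hu, EqvGen.trans _ _ _ (EqvGen.symm _ _ hbc) hv, huv⟩
        · have hvu' : R v u' :=
            Or.inr (EqvGen.trans _ _ _ (EqvGen.symm _ _ hv) hu')
          exact Or.inr ⟨u, v', hu, hv', EqvGen.trans _ _ _ huv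
            (EqvGen.trans _ _ _ (EqvGen.rel _ _ hvu') huv')⟩
    have hle : Relation.Map r f f ⊔ s ≤ E := by
      rintro a b (⟨u, v, huv, rfl, rfl⟩ | hab)
      · exact Or.inr ⟨u, v, EqvGen.refl _, EqvGen.refl _, EqvGen.rel _ _ (Or.inl huv)⟩
      · exact Or.inl (EqvGen.rel _ _ hab)
    intro h
    rcases eqvGen_le_of_equivalence hE hle _ _ h with h | ⟨u, v, hu, hv, huv⟩
    · exact EqvGen.rel _ _ (Or.inr h)
    · exact EqvGen.trans _ _ _ (EqvGen.rel _ _ (Or.inr hu))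
        (EqvGen.trans _ _ _ huv (EqvGen.rel _ _ (Or.inr (EqvGen.symm _ _ hv))))
  · refine eqvGen_le_of_equivalence ((EqvGen.is_equivalence _).comap f) ?_ y y'
    rintro u v (huv | huv)
    · exact EqvGen.rel _ _ (Or.inl ⟨u, v, huv, rfl, rfl⟩)
    · exact EqvGen.mono le_sup_right _ _ huv

theorem eqvGen_map_iff_of_injective {f : Y → X} (hf : f.Injective) {r : Y → Y → Prop}
    {x x' : X} : EqvGen (Relation.Map r f f) x x' ↔ x = x' ∨ Relation.Map (EqvGen r) f f x x' := by
  constructor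
  · have hE : Equivalence fun x x' => x = x' ∨ Relation.Map (EqvGen r) f f x x' := by
      refine ⟨fun x => Or.inl rfl, ?_, ?_⟩
      · rintro x x' (rfl | ⟨u, v, huv, rfl, rfl⟩)
        · exact Or.inl rfl
        · exact Or.inr ⟨v, u, EqvGen.symm _ _ huv, rfl, rfl⟩
      · rintro x x' x'' (rfl | ⟨u, v, huv, rfl, rfl⟩) (rfl | ⟨v', w, hvw, hv, rfl⟩)
        · exact Or.inl rfl
        · exact Or.inr ⟨v', w, hvw, hv, rfl⟩
        · exact Or.inr ⟨u, v, huv, rfl, rfl⟩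
        · obtain rfl := hf hv
          exact Or.inr ⟨u, w, EqvGen.trans _ _ _ huv hvw, rfl, rfl⟩
    refine eqvGen_le_of_equivalence hE ?_ x x'
    rintro _ _ ⟨u, v, huv, rfl, rfl⟩
    exact Or.inr ⟨u, v, EqvGen.rel _ _ huv, rfl, rfl⟩
  · rintro (rfl | ⟨u, v, huv, rfl, rfl⟩)
    · exact EqvGen.refl _
    · refine eqvGen_le_of_equivalence ((EqvGen.is_equivalence _).comap f) ?_ u v huv
      exact fun u v huv => EqvGen.rel _ _ ⟨u, v, huv, rfl, rfl⟩

/-- `hfg` and `hoverlap` say that the images of `f` and `g` overlap exactly along the interface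
`W`; seen from `Y`, the piece `Z` then only contributes the connections it induces on `W`. -/
theorem eqvGen_map_sup_map_iff {f : Y → X} {g : Z → X} (hf : f.Injective) (hg : g.Injective)
    {ι : W → Y} {o : W → Z} (hfg : ∀ w, f (ι w) = g (o w))
    (hoverlap : ∀ y z, f y = g z → ∃ w, ι w = y) (r : Y → Y → Prop) (σ : Z → Z → Prop)
    (y y' : Y) :
    EqvGen (Relation.Map r f f ⊔ Relation.Map σ g g) (f y) (f y') ↔
      EqvGen (r ⊔ Relation.Map (EqvGen σ on o) ι ι) y y' := by
  rw [eqvGen_map_sup_iff]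
  have hint : ∀ u z, f u = g z → ∃ w, ι w = u ∧ o w = z := by
    intro u z h
    obtain ⟨w, rfl⟩ := hoverlap u z h
    exact ⟨w, rfl, hg ((hfg w).symm.trans h)⟩
  refine iff_of_eq (congrFun (congrFun (eqvGen_eq_of_le_of_le ?_ ?_) y) y')
  · rintro u u' (h | h)
    · exact EqvGen.rel _ _ (Or.inl h)
    rcases (eqvGen_map_iff_of_injective hg).mp h with h | ⟨z, z', hzz', hz, hz'⟩
    · obtain rfl := hf h
      exact EqvGen.refl _
    obtain ⟨w, rfl, rfl⟩ := hint u z hz.symm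
    obtain ⟨w', rfl, rfl⟩ := hint u' z' hz'.symm
    exact EqvGen.rel _ _ (Or.inr ⟨w, w', hzz', rfl, rfl⟩)
  · rintro u u' (h | ⟨w, w', hww', rfl, rfl⟩)
    · exact EqvGen.rel _ _ (Or.inl h)
    refine EqvGen.rel _ _ (Or.inr ?_)
    show EqvGen _ (f (ι w)) (f (ι w'))
    rw [hfg, hfg, eqvGen_map_iff_of_injective hg]
    exact Or.inr ⟨o w, o w', hww', rfl, rfl⟩

end Relation

section Stacking

open Sum

variable {a b c d : ℕ}

def stackGen (P : Fin a ⊕ Fin b → Fin a ⊕ Fin b → Prop) (Q : Fin b ⊕ Fin c → Fin b ⊕ Fin c → Prop) :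
    Fin a ⊕ (Fin b ⊕ Fin c) → Fin a ⊕ (Fin b ⊕ Fin c) → Prop :=
  Relation.Map P ιtop ιtop ⊔ Relation.Map Q ιbot ιbot

theorem stackRel_eq_onFun (P : Fin a ⊕ Fin b → Fin a ⊕ Fin b → Prop)
    (Q : Fin b ⊕ Fin c → Fin b ⊕ Fin c → Prop) :
    stackRel P Q = (EqvGen (stackGen P Q) on ιout) := by
  have hgen : (fun s t => (∃ u v, P u v ∧ s = ιtop u ∧ t = ιtop v) ∨
      (∃ u v, Q u v ∧ s = ιbot (a := a) u ∧ t = ιbot (a := a) v)) = stackGen P Q := by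
    ext s t
    simp only [stackGen, Relation.Map, Pi.sup_apply, sup_Prop_eq, eq_comm]
  ext x y
  rw [stackRel, hgen]

theorem stackRel_equivalence (P : Fin a ⊕ Fin b → Fin a ⊕ Fin b → Prop)
    (Q : Fin b ⊕ Fin c → Fin b ⊕ Fin c → Prop) : Equivalence (stackRel P Q) := by
  rw [stackRel_eq_onFun]
  exact (EqvGen.is_equivalence _).comap _

theorem ιout_injective : Injective (ιout : Fin a ⊕ Fin c → Fin a ⊕ (Fin b ⊕ Fin c)) := by
  rintro (i | i) (j | j) h <;> cases h <;> rfl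

theorem stackRel_eqvGen_idConn {Q : Fin a ⊕ Fin c → Fin a ⊕ Fin c → Prop} (hQ : Equivalence Q) :
    stackRel (EqvGen (idConn a)) Q = Q := by
  ext x y
  rw [stackRel_eq_onFun]
  constructor
  · let collapse : Fin a ⊕ (Fin a ⊕ Fin c) → Fin a ⊕ Fin c := Sum.elim inl id
    have hstrands : EqvGen (idConn a) ≤ (Eq on Sum.elim id id) := by
      refine eqvGen_le_of_equivalence (eq_equivalence.comap _) ?_
      rintro (i | i) (j | j) h
      all_goals first | exact h.elim | exact Fin.ext h
    have hgen : stackGen (EqvGen (idConn a)) Q ≤ (Q on collapse) := by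
      rintro _ _ (⟨u, v, huv, rfl, rfl⟩ | ⟨u, v, huv, rfl, rfl⟩)
      · have hc : collapse (ιtop u) = collapse (ιtop v) := by
          have := hstrands u v huv
          rcases u with i | i <;> rcases v with j | j <;> exact congrArg inl this
        show Q (collapse (ιtop u)) (collapse (ιtop v))
        rw [hc]
        exact hQ.refl _
      · exact huv
    have hout : ∀ z, collapse (ιout z) = z := by rintro (i | j) <;> rfl
    intro h
    simpa only [onFun, hout] using eqvGen_le_of_equivalence (hQ.comap collapse) hgen _ _ h
  · have hstrand : ∀ z, EqvGen (stackGen (EqvGen (idConn a)) Q) (ιout z) (ιbot z) := by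
      rintro (i | j)
      · exact EqvGen.rel _ _ (Or.inl ⟨inl i, inr i, EqvGen.rel _ _ rfl, rfl, rfl⟩)
      · exact EqvGen.refl _
    intro h
    have hxy : EqvGen (stackGen (EqvGen (idConn a)) Q) (ιbot x) (ιbot y) :=
      EqvGen.rel _ _ (Or.inr ⟨x, y, h, rfl, rfl⟩)
    exact (hstrand x).trans _ _ _ (hxy.trans _ _ _ ((hstrand y).symm _ _))

variable (A : Fin a ⊕ Fin b → Fin a ⊕ Fin b → Prop) (B : Fin b ⊕ Fin c → Fin b ⊕ Fin c → Prop)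
  (C : Fin c ⊕ Fin d → Fin c ⊕ Fin d → Prop)

def stackGen₃ :
    Fin a ⊕ (Fin b ⊕ (Fin c ⊕ Fin d)) → Fin a ⊕ (Fin b ⊕ (Fin c ⊕ Fin d)) → Prop :=
  Relation.Map A (Sum.map id inl) (Sum.map id inl) ⊔
    Relation.Map B (inr ∘ Sum.map id inl) (inr ∘ Sum.map id inl) ⊔
    Relation.Map C (inr ∘ inr) (inr ∘ inr)

theorem stackRel_right_nested_eq :
    stackRel A (stackRel B C) = (EqvGen (stackGen₃ A B C) on Sum.map id (inr ∘ inr)) := by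
  let f : Fin a ⊕ (Fin b ⊕ Fin d) → Fin a ⊕ (Fin b ⊕ (Fin c ⊕ Fin d)) := Sum.map id ιout
  have hf : Injective f := Sum.map_injective.mpr ⟨injective_id, ιout_injective⟩
  have hoverlap : ∀ y z, f y = inr z → ∃ w, ιbot w = y := by
    rintro (i | w) z h
    · cases h
    · exact ⟨w, rfl⟩
  have hgen : Relation.Map (Relation.Map A ιtop ιtop) f f ⊔ Relation.Map (stackGen B C) inr inr =
      stackGen₃ A B C := by
    have hA : f ∘ ιtop = Sum.map id inl := by funext w; rcases w with i | j <;> rfl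
    have hB : (inr ∘ ιtop : Fin b ⊕ Fin c → Fin a ⊕ (Fin b ⊕ (Fin c ⊕ Fin d))) =
        inr ∘ Sum.map id inl := by
      funext w; rcases w with i | j <;> rfl
    have hC : inr ∘ ιbot = (inr ∘ inr : Fin c ⊕ Fin d → Fin a ⊕ (Fin b ⊕ (Fin c ⊕ Fin d))) := rfl
    simp only [stackGen, stackGen₃, Relation.map_sup, Relation.map_map, hA, hB, hC, sup_assoc]
  have hout : ∀ x, f (ιout x) = Sum.map id (inr ∘ inr) x := by rintro (i | j) <;> rfl
  ext x y
  have key := eqvGen_map_sup_map_iff hf inr_injective (ι := ιbot) (o := ιout) (fun _ => rfl)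
    hoverlap (Relation.Map A ιtop ιtop) (stackGen B C) (ιout x) (ιout y)
  rw [← stackRel_eq_onFun, hgen, hout, hout] at key
  rw [stackRel_eq_onFun]
  exact key.symm

theorem stackRel_left_nested_eq :
    stackRel (stackRel A B) C = (EqvGen (stackGen₃ A B C) on Sum.map id (inr ∘ inr)) := by
  let f : Fin a ⊕ (Fin c ⊕ Fin d) → Fin a ⊕ (Fin b ⊕ (Fin c ⊕ Fin d)) := Sum.map id inr
  let g : Fin a ⊕ (Fin b ⊕ Fin c) → Fin a ⊕ (Fin b ⊕ (Fin c ⊕ Fin d)) := Sum.map id (Sum.map id inl)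
  have hf : Injective f := Sum.map_injective.mpr ⟨injective_id, inr_injective⟩
  have hg : Injective g :=
    Sum.map_injective.mpr ⟨injective_id, Sum.map_injective.mpr ⟨injective_id, inl_injective⟩⟩
  have hfg : ∀ w, f (ιtop w) = g (ιout w) := by rintro (i | k) <;> rfl
  have hoverlap : ∀ y z, f y = g z → ∃ w, ιtop w = y := by
    rintro (i | k | l) (j | j | j) h <;> cases h
    · exact ⟨inl i, rfl⟩
    · exact ⟨inr k, rfl⟩
  have hgen : Relation.Map (Relation.Map C ιbot ιbot) f f ⊔ Relation.Map (stackGen A B) g g =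
      stackGen₃ A B C := by
    have hA : g ∘ ιtop = Sum.map id inl := by funext w; rcases w with i | j <;> rfl
    have hB : g ∘ ιbot = (inr ∘ Sum.map id inl : Fin b ⊕ Fin c → _) := by
      funext w; rcases w with i | j <;> rfl
    have hC : f ∘ ιbot = (inr ∘ inr : Fin c ⊕ Fin d → Fin a ⊕ (Fin b ⊕ (Fin c ⊕ Fin d))) := rfl
    simp only [stackGen, stackGen₃, Relation.map_sup, Relation.map_map, hA, hB, hC]
    exact sup_comm _ _
  have hout : ∀ x, f (ιout x) = Sum.map id (inr ∘ inr) x := by rintro (i | j) <;> rfl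
  ext x y
  have key := eqvGen_map_sup_map_iff hf hg hfg hoverlap (Relation.Map C ιbot ιbot) (stackGen A B)
    (ιout x) (ιout y)
  rw [← stackRel_eq_onFun, hgen, hout, hout, sup_comm] at key
  rw [stackRel_eq_onFun]
  exact key.symm

theorem stackRel_assoc : stackRel A (stackRel B C) = stackRel (stackRel A B) C := by
  rw [stackRel_right_nested_eq, stackRel_left_nested_eq]

end Stacking

def Plan.append : {a b c : ℕ} → Plan a b → Plan b c → Plan a c
  | _, _, _, .nil _, ql => ql
  | _, _, _, .cons r rest, ql => .cons r (rest.append ql)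

section Plans

variable {a b c : ℕ}

theorem planRel_equivalence : ∀ {a b : ℕ} (pl : Plan a b), Equivalence (planRel pl)
  | _, _, .nil _ => EqvGen.is_equivalence _
  | _, _, .cons _ rest => stackRel_equivalence _ (planRel rest)

theorem planRel_append : ∀ {a b c : ℕ} (pl : Plan a b) (ql : Plan b c),
    planRel (pl.append ql) = stackRel (planRel pl) (planRel ql)
  | _, _, _, .nil _, ql => (stackRel_eqvGen_idConn (planRel_equivalence ql)).symm
  | _, _, _, .cons r rest, ql => by
    rw [Plan.append, planRel, planRel, planRel_append rest ql, stackRel_assoc]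

theorem neg_one_le_planHt : ∀ {a b : ℕ} (pl : Plan a b), -1 ≤ planHt pl
  | _, _, .nil _ => le_rfl
  | _, _, .cons _ rest => (neg_one_le_planHt rest).trans (le_max_right _ _)

theorem planHt_append : ∀ {a b c : ℕ} (pl : Plan a b) (ql : Plan b c),
    planHt (pl.append ql) = max (planHt pl) (planHt ql)
  | _, _, _, .nil _, ql => (max_eq_right (neg_one_le_planHt ql)).symm
  | _, _, _, .cons r rest, ql => by
    rw [Plan.append, planHt, planHt, planHt_append rest ql, max_assoc]

theorem realizes_iff {pl : Plan a b} {P : Fin a ⊕ Fin b → Fin a ⊕ Fin b → Prop} :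
    Realizes pl P ↔ planRel pl = P :=
  ⟨fun h => funext₂ fun x y => propext (h x y), fun h _ _ => h ▸ Iff.rfl⟩

theorem Realizes.append {pl : Plan a b} {ql : Plan b c} {P : Fin a ⊕ Fin b → Fin a ⊕ Fin b → Prop}
    {Q : Fin b ⊕ Fin c → Fin b ⊕ Fin c → Prop} (hP : Realizes pl P) (hQ : Realizes ql Q) :
    Realizes (pl.append ql) (stackRel P Q) := by
  rw [realizes_iff] at *
  rw [planRel_append, hP, hQ]

theorem bddBelow_planHt_realizes (P : Fin a ⊕ Fin b → Fin a ⊕ Fin b → Prop) :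
    BddBelow {h : ℤ | ∃ pl : Plan a b, Realizes pl P ∧ planHt pl = h} :=
  ⟨-1, by rintro _ ⟨pl, -, rfl⟩; exact neg_one_le_planHt pl⟩

theorem ht_le_planHt {pl : Plan a b} {P : Fin a ⊕ Fin b → Fin a ⊕ Fin b → Prop}
    (h : Realizes pl P) : ht P ≤ planHt pl :=
  csInf_le (bddBelow_planHt_realizes P) ⟨pl, h, rfl⟩

theorem exists_realizes_planHt_eq_ht {P : Fin a ⊕ Fin b → Fin a ⊕ Fin b → Prop}
    (h : ∃ pl : Plan a b, Realizes pl P) : ∃ pl : Plan a b, Realizes pl P ∧ planHt pl = ht P := by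
  obtain ⟨pl, hpl⟩ := h
  exact Int.csInf_mem (s := {h : ℤ | ∃ pl : Plan a b, Realizes pl P ∧ planHt pl = h})
    ⟨planHt pl, pl, hpl, rfl⟩ (bddBelow_planHt_realizes P)

theorem ht_stackRel_le {P : Fin a ⊕ Fin b → Fin a ⊕ Fin b → Prop}
    {Q : Fin b ⊕ Fin c → Fin b ⊕ Fin c → Prop} (hP : ∃ pl : Plan a b, Realizes pl P)
    (hQ : ∃ ql : Plan b c, Realizes ql Q) : ht (stackRel P Q) ≤ max (ht P) (ht Q) := by
  obtain ⟨pl, hpl, hplht⟩ := exists_realizes_planHt_eq_ht hP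
  obtain ⟨ql, hql, hqlht⟩ := exists_realizes_planHt_eq_ht hQ
  calc ht (stackRel P Q) ≤ planHt (pl.append ql) := ht_le_planHt (hpl.append hql)
    _ = max (ht P) (ht Q) := by rw [planHt_append, hplht, hqlht]

end Plans

theorem height_closed_under_composition_general {n m k : ℕ} (l : ℤ)
    (P : (Fin n ⊕ Fin m) → (Fin n ⊕ Fin m) → Prop)
    (Q : (Fin m ⊕ Fin k) → (Fin m ⊕ Fin k) → Prop)
    (hPpic : ∃ pl : Plan n m, Realizes pl P)
    (hQpic : ∃ pl : Plan m k, Realizes pl Q)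
    (hP : ht P ≤ l) (hQ : ht Q ≤ l) :
    ht (stackRel P Q) ≤ l :=
  (ht_stackRel_le hPpic hQpic).trans (max_le hP hQ)

/-- For each `l ≥ -1`, the partitions of left-height at most `l`
are closed under the partition category composition: if `p` and `q` are
(composable) partitions of left-height at most `l`, then the partition
underlying their composite has left-height at most `l`.  Hence the sets
`P_{≤l}(n,m)` span a subcategory of the partition category. -/
theorem height_closed_under_composition {n m k : ℕ} (l : ℤ) (hl : -1 ≤ l)
    (P : (Fin n ⊕ Fin m) → (Fin n ⊕ Fin m) → Prop)
    (Q : (Fin m ⊕ Fin k) → (Fin m ⊕ Fin k) → Prop)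
    (hPpic : ∃ pl : Plan n m, Realizes pl P)
    (hQpic : ∃ pl : Plan m k, Realizes pl Q)
    (hP : ht P ≤ l) (hQ : ht Q ≤ l) :
    ht (stackRel P Q) ≤ l :=
  height_closed_under_composition_general l P Q hPpic hQpic hP hQ
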